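/- For every β > 0 there exist constants C > 0 and γ > 0 such that the function ρ_β : ℝ → ℝ, defined by ρ_β(y) = exp(β y² / (y² − 1)) for |y| < 1 and ρ_β(y) = 0 for |y| ≥ 1, satisfies the Gevrey-2 derivative bounds |ρ_β^{(k)}(y)| ≤ C · γ^k · (k!)² for every y ∈ ℝ and every natural number k. -/

import Mathlib

/-- The compactly supported Gevrey cutoff `ρ_β(y) = exp(βy²/(y²−1))` for `|y| < 1`,
extended by `0` for `|y| ≥ 1`. -/
noncomputable def rhoCutoff (β : ℝ) (y : ℝ) : ℝ :=
  if |y| < 1 then Real.exp (β * y ^ 2 / (y ^ 2 - 1)) else 0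

/-!
On `(-1, 1)` the cutoff is the real part of the function `F(z) = exp (βz²/(z² - 1))`, holomorphic
off `z = ±1`. On the disc of radius `d/4`, `d = 1 - y²`, around `y ∈ (-1, 1)` one has
`Re (z² - 1) ≤ -7d/16` and `‖z² - 1‖ ≤ 25d/16`, hence `|F| ≤ e^β e^{-b/d}` with `b = 112β/625`.
Cauchy's estimate gives `|ρ_β^{(k)}(y)| ≤ k! e^β e^{-b/d} (4/d)^k`, and `e^{-x} ≤ k!/x^k` at
`x = b/d` trades the blow-up of `(4/d)^k` against the decay of `e^{-b/d}`, leaving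
`e^β (4/b)^k (k!)²` uniformly in `y`. Outside `[-1, 1]` every derivative vanishes, and at `±1` the
bound passes to the limit because `ρ_β` is smooth.
-/

open Real Set Metric Filter Topology
open scoped Nat

theorem Complex.re_inv_le_of_re_le_of_norm_le {w : ℂ} {a c : ℝ} (ha : 0 < a)
    (hre : w.re ≤ -a) (hnorm : ‖w‖ ≤ c) : w⁻¹.re ≤ -a / c ^ 2 := by
  have hw : 0 < ‖w‖ := norm_pos_iff.2 fun h => by simp [h] at hre; linarith
  rw [inv_re, normSq_eq_norm_sq]
  calc w.re / ‖w‖ ^ 2 ≤ -a / ‖w‖ ^ 2 := by gcongr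
    _ ≤ -a / c ^ 2 := by rw [neg_div, neg_div, neg_le_neg_iff]; gcongr

theorem Real.exp_neg_le_factorial_div_pow {x : ℝ} (hx : 0 < x) (k : ℕ) :
    exp (-x) ≤ k ! / x ^ k := by
  have h := pow_div_factorial_le_exp x hx.le k
  rw [div_le_iff₀ (by positivity)] at h
  rw [exp_neg, le_div_iff₀ (by positivity), inv_mul_le_iff₀ (exp_pos x)]
  linarith

theorem iteratedDeriv_eqOn_re {f : ℝ → ℝ} {F : ℂ → ℂ} {U : Set ℂ} {s : Set ℝ}
    (hU : IsOpen U) (hF : DifferentiableOn ℂ F U) (hs : IsOpen s)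
    (hsU : MapsTo ((↑) : ℝ → ℂ) s U) (hfF : EqOn f (fun x => (F x).re) s) (k : ℕ) :
    EqOn (iteratedDeriv k f) (fun x => (iteratedDeriv k F x).re) s := by
  induction k with
  | zero => simpa using hfF
  | succ k ih =>
    intro x hx
    have hF' : AnalyticOnNhd ℂ (iteratedDeriv k F) U := by
      rw [iteratedDeriv_eq_iterate]; exact (hF.analyticOnNhd hU).iterated_deriv k
    have hder : HasDerivAt (iteratedDeriv k F) (iteratedDeriv (k + 1) F x) x := by
      rw [iteratedDeriv_succ]; exact (hF' x (hsU hx)).differentiableAt.hasDerivAt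
    rw [iteratedDeriv_succ, (ih.eventuallyEq_of_mem (hs.mem_nhds hx)).deriv_eq]
    exact hder.real_of_complex.deriv

noncomputable def rhoCutoffExt (β : ℝ) (z : ℂ) : ℂ :=
  Complex.exp (β * z ^ 2 / (z ^ 2 - 1))

theorem differentiableOn_rhoCutoffExt (β : ℝ) :
    DifferentiableOn ℂ (rhoCutoffExt β) {z | z ^ 2 ≠ 1} := by
  intro z hz
  apply DifferentiableAt.differentiableWithinAt
  unfold rhoCutoffExt
  fun_prop (disch := exact sub_ne_zero.2 hz)

theorem rhoCutoff_eq_re_rhoCutoffExt (β : ℝ) {y : ℝ} (hy : |y| < 1) :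
    rhoCutoff β y = (rhoCutoffExt β y).re := by
  rw [rhoCutoff, if_pos hy, rhoCutoffExt, ← Complex.ofReal_re (rexp _), Complex.ofReal_exp]
  push_cast
  rfl

theorem iteratedDeriv_rhoCutoff_eq_re (β : ℝ) (k : ℕ) {y : ℝ} (hy : |y| < 1) :
    iteratedDeriv k (rhoCutoff β) y = (iteratedDeriv k (rhoCutoffExt β) y).re := by
  refine iteratedDeriv_eqOn_re (isOpen_ne_fun (continuous_pow 2) continuous_const)
    (differentiableOn_rhoCutoffExt β) (isOpen_lt continuous_abs continuous_const)
    (fun x hx => ?_) (fun x hx => rhoCutoff_eq_re_rhoCutoffExt β hx) k hy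
  have : x ^ 2 < 1 := (sq_lt_one_iff_abs_lt_one x).2 hx
  show (x : ℂ) ^ 2 ≠ 1
  exact_mod_cast this.ne

theorem sq_sub_one_bounds_of_mem_closedBall {y : ℝ} (hy : |y| < 1) {z : ℂ}
    (hz : z ∈ closedBall (y : ℂ) ((1 - y ^ 2) / 4)) :
    (z ^ 2 - 1).re ≤ -(7 / 16 * (1 - y ^ 2)) ∧ ‖z ^ 2 - 1‖ ≤ 25 / 16 * (1 - y ^ 2) := by
  set d := 1 - y ^ 2 with hd
  have hd0 : 0 ≤ d := by nlinarith [abs_nonneg y, sq_abs y]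
  have hd1 : d ≤ 1 := by nlinarith [sq_nonneg y]
  rw [mem_closedBall, Complex.dist_eq] at hz
  have hsum : ‖z + y‖ ≤ 9 / 4 := calc
    ‖z + y‖ = ‖(z - y) + 2 * (y : ℂ)‖ := by ring_nf
    _ ≤ ‖z - y‖ + 2 * |y| := by simpa using norm_add_le (z - y) (2 * (y : ℂ))
    _ ≤ 9 / 4 := by linarith
  have hsq : ‖z ^ 2 - (y : ℂ) ^ 2‖ ≤ 9 / 16 * d := calc
    ‖z ^ 2 - (y : ℂ) ^ 2‖ = ‖z - y‖ * ‖z + y‖ := by rw [← norm_mul]; ring_nf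
    _ ≤ d / 4 * (9 / 4) := by gcongr
    _ = 9 / 16 * d := by ring
  have hsplit : z ^ 2 - 1 = (z ^ 2 - (y : ℂ) ^ 2) - (d : ℂ) := by rw [hd]; push_cast; ring
  rw [hsplit]
  constructor
  · rw [Complex.sub_re, Complex.ofReal_re]
    linarith [Complex.re_le_norm (z ^ 2 - (y : ℂ) ^ 2)]
  · calc _ ≤ ‖z ^ 2 - (y : ℂ) ^ 2‖ + ‖(d : ℂ)‖ := norm_sub_le _ _
      _ ≤ 25 / 16 * d := by rw [Complex.norm_real, norm_of_nonneg hd0]; linarith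

theorem norm_rhoCutoffExt_le {β : ℝ} (hβ : 0 ≤ β) {a c : ℝ} (ha : 0 < a) {z : ℂ}
    (hre : (z ^ 2 - 1).re ≤ -a) (hnorm : ‖z ^ 2 - 1‖ ≤ c) :
    ‖rhoCutoffExt β z‖ ≤ exp (β - β * a / c ^ 2) := by
  have hz : z ^ 2 - 1 ≠ 0 := fun h => by simp [h] at hre; linarith
  have hsplit : (β : ℂ) * z ^ 2 / (z ^ 2 - 1) = β + β * (z ^ 2 - 1)⁻¹ := by field_simp; ring
  rw [rhoCutoffExt, Complex.norm_exp, hsplit, Complex.add_re, Complex.ofReal_re,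
    Complex.re_ofReal_mul, exp_le_exp]
  have h := mul_le_mul_of_nonneg_left (Complex.re_inv_le_of_re_le_of_norm_le ha hre hnorm) hβ
  rw [show β * (-a / c ^ 2) = -(β * a / c ^ 2) by ring] at h
  linarith

theorem abs_iteratedDeriv_rhoCutoff_le_of_abs_lt {β : ℝ} (hβ : 0 < β) (k : ℕ) {y : ℝ}
    (hy : |y| < 1) :
    |iteratedDeriv k (rhoCutoff β) y| ≤ exp β * (625 / (28 * β)) ^ k * (k ! : ℝ) ^ 2 := by
  set d := 1 - y ^ 2 with hd
  have hd0 : 0 < d := by nlinarith [abs_nonneg y, sq_abs y]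
  have hbound : ∀ z ∈ closedBall (y : ℂ) (d / 4),
      z ^ 2 ≠ 1 ∧ ‖rhoCutoffExt β z‖ ≤ exp β * exp (-(112 * β / 625 / d)) := by
    intro z hz
    obtain ⟨hre, hnorm⟩ := sq_sub_one_bounds_of_mem_closedBall hy hz
    rw [← hd] at hre hnorm
    refine ⟨fun h => by simp [h] at hre; linarith, ?_⟩
    refine (norm_rhoCutoffExt_le hβ.le (by positivity) hre hnorm).trans_eq ?_
    rw [← exp_add]
    congr 1
    field_simp
    ring
  have hCauchy := Complex.norm_iteratedDeriv_le_of_forall_mem_sphere_norm_le k (by positivity)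
    ((differentiableOn_rhoCutoffExt β).diffContOnCl_ball fun z hz => (hbound z hz).1)
    fun z hz => (hbound z (sphere_subset_closedBall hz)).2
  rw [iteratedDeriv_rhoCutoff_eq_re β k hy]
  calc _ ≤ ‖iteratedDeriv k (rhoCutoffExt β) y‖ := Complex.abs_re_le_norm _
    _ ≤ k ! * (exp β * exp (-(112 * β / 625 / d))) / (d / 4) ^ k := hCauchy
    _ ≤ k ! * (exp β * (k ! / (112 * β / 625 / d) ^ k)) / (d / 4) ^ k := by
        gcongr; exact exp_neg_le_factorial_div_pow (by positivity) k
    _ = exp β * (1 / (112 * β / 625 / d * (d / 4))) ^ k * (k ! : ℝ) ^ 2 := by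
        rw [one_div_pow, mul_pow]; field_simp
    _ = exp β * (625 / (28 * β)) ^ k * (k ! : ℝ) ^ 2 := by congr 3; field_simp; ring

theorem iteratedDeriv_rhoCutoff_eq_zero_of_one_lt_abs (β : ℝ) (k : ℕ) {y : ℝ} (hy : 1 < |y|) :
    iteratedDeriv k (rhoCutoff β) y = 0 := by
  have hzero : rhoCutoff β =ᶠ[𝓝 y] 0 :=
    (continuousAt_const.eventually_lt continuous_abs.continuousAt hy).mono fun t ht => by
      simp [rhoCutoff, ht.not_gt]
  rw [hzero.iteratedDeriv_eq, iteratedDeriv_const_zero]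

theorem rhoCutoff_eq_exp_mul_expNegInvGlue {β : ℝ} (hβ : 0 < β) :
    rhoCutoff β = fun y => exp β * expNegInvGlue ((1 - y ^ 2) / β) := by
  funext y
  rcases lt_or_ge |y| 1 with hy | hy
  · have hpos : 0 < 1 - y ^ 2 := by nlinarith [abs_nonneg y, sq_abs y]
    have hne : y ^ 2 - 1 ≠ 0 := by linarith
    rw [rhoCutoff, if_pos hy, expNegInvGlue, if_neg (div_pos hpos hβ).not_ge, ← exp_add]
    congr 1
    field_simp
    ring
  · have hnonpos : 1 - y ^ 2 ≤ 0 := by nlinarith [abs_nonneg y, sq_abs y]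
    rw [rhoCutoff, if_neg hy.not_gt,
      expNegInvGlue.zero_of_nonpos (div_nonpos_of_nonpos_of_nonneg hnonpos hβ.le), mul_zero]

theorem contDiff_rhoCutoff {β : ℝ} (hβ : 0 < β) {n : ℕ∞} : ContDiff ℝ n (rhoCutoff β) := by
  rw [rhoCutoff_eq_exp_mul_expNegInvGlue hβ]
  exact contDiff_const.mul (expNegInvGlue.contDiff.comp
    ((contDiff_const.sub (contDiff_id.pow 2)).div_const β))

theorem rhoCutoff_gevrey_two (β : ℝ) (hβ : 0 < β) :
    ∃ C γ : ℝ, 0 < C ∧ 0 < γ ∧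
      ∀ (k : ℕ) (y : ℝ),
        |iteratedDeriv k (rhoCutoff β) y| ≤ C * γ ^ k * ((k.factorial : ℝ)) ^ 2 := by
  refine ⟨exp β, 625 / (28 * β), exp_pos β, by positivity, fun k y => ?_⟩
  rcases le_or_gt |y| 1 with hy | hy
  · have hclosed : IsClosed
        {x | |iteratedDeriv k (rhoCutoff β) x| ≤ exp β * (625 / (28 * β)) ^ k * (k ! : ℝ) ^ 2} :=
      isClosed_le ((contDiff_rhoCutoff hβ).continuous_iteratedDeriv k le_rfl).abs continuous_const
    have hy_mem : y ∈ closure (Ioo (-1) 1) := by rw [closure_Ioo (by norm_num)]; exact abs_le.1 hy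
    exact hclosed.closure_subset_iff.2
      (fun x hx => abs_iteratedDeriv_rhoCutoff_le_of_abs_lt hβ k (abs_lt.2 hx)) hy_mem
  · rw [iteratedDeriv_rhoCutoff_eq_zero_of_one_lt_abs β k hy, abs_zero]
    positivity
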